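/- Let n ≥ 0, let η be the Lorentzian bilinear form on ℝ^{n+2} described in the context, let 𝔤 ⊆ so(1,n+1)_{ℝU} be a Lie subalgebra, and let R ∈ 𝓡(𝔤) be a curvature tensor with values in 𝔤. Then R(U, x) = 0 for every x ∈ U^⊥ = span{U, X_1, …, X_n}. -/

import Mathlib

def mid (n : ℕ) (i : Fin n) : Fin (n + 2) := ⟨(i : ℕ) + 1, by omega⟩

def lastIdx (n : ℕ) : Fin (n + 2) := ⟨n + 1, by omega⟩

/-- The Lorentzian bilinear form on `ℝ^{n+2}` with Gram matrix `[[0,0,1],[0,E_n,0],[1,0,0]]`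
in the basis `U = e_0, X_1 = e_1, …, X_n = e_n, V = e_{n+1}`. -/
def eta (n : ℕ) (x y : Fin (n + 2) → ℝ) : ℝ :=
  x 0 * y (lastIdx n) + x (lastIdx n) * y 0 + ∑ i : Fin n, x (mid n i) * y (mid n i)


/-- The vector `U = e_0`. -/
def Uvec (n : ℕ) : Fin (n + 2) → ℝ := Pi.single 0 1

/-- The vector `V = e_{n+1}`. -/
def Vvec (n : ℕ) : Fin (n + 2) → ℝ := Pi.single (lastIdx n) 1

/-- The set of basis vectors `X_1 = e_1, …, X_n = e_n`. -/
def Xset (n : ℕ) : Set (Fin (n + 2) → ℝ) := Set.range fun i : Fin n => Pi.single (mid n i) 1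

attribute [local instance 100] LieRing.ofAssociativeRing

lemma lastIdx_ne_zero (n : ℕ) : lastIdx n ≠ 0 := by
  simp [lastIdx, Fin.ext_iff]

lemma mid_ne_zero (n : ℕ) (i : Fin n) : mid n i ≠ 0 := by
  simp [mid, Fin.ext_iff]

lemma mid_ne_last (n : ℕ) (i : Fin n) : mid n i ≠ lastIdx n := by
  simp [mid, lastIdx, Fin.ext_iff]
  omega

lemma eta_comm (n : ℕ) (x y : Fin (n + 2) → ℝ) : eta n x y = eta n y x := by
  unfold eta
  rw [Finset.sum_congr rfl (fun i _ => mul_comm (x (mid n i)) (y (mid n i)))]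
  ring

lemma eta_add_left (n : ℕ) (x y z : Fin (n + 2) → ℝ) :
    eta n (x + y) z = eta n x z + eta n y z := by
  unfold eta
  simp [add_mul, Finset.sum_add_distrib]
  ring

lemma eta_smul_left (n : ℕ) (c : ℝ) (x z : Fin (n + 2) → ℝ) :
    eta n (c • x) z = c * eta n x z := by
  unfold eta
  simp [Finset.mul_sum, mul_add, mul_assoc]

lemma eta_neg_left (n : ℕ) (x z : Fin (n + 2) → ℝ) :
    eta n (-x) z = - eta n x z := by
  have := eta_smul_left n (-1) x z
  simpa using this

lemma eta_Uvec (n : ℕ) (x : Fin (n + 2) → ℝ) : eta n x (Uvec n) = x (lastIdx n) := by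
  unfold eta Uvec
  rw [Pi.single_eq_of_ne (lastIdx_ne_zero n), Pi.single_eq_same,
    Finset.sum_congr rfl (fun i _ => by rw [Pi.single_eq_of_ne (mid_ne_zero n i)])]
  simp

lemma eta_Vvec (n : ℕ) (x : Fin (n + 2) → ℝ) : eta n x (Vvec n) = x 0 := by
  unfold eta Vvec
  rw [Pi.single_eq_same, Pi.single_eq_of_ne (Ne.symm (lastIdx_ne_zero n)),
    Finset.sum_congr rfl (fun i _ => by rw [Pi.single_eq_of_ne (mid_ne_last n i)])]
  simp

lemma eta_X (n : ℕ) (j : Fin n) (x : Fin (n + 2) → ℝ) :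
    eta n x (Pi.single (mid n j) 1) = x (mid n j) := by
  unfold eta
  rw [Pi.single_eq_of_ne (Ne.symm (mid_ne_last n j)),
    Pi.single_eq_of_ne (Ne.symm (mid_ne_zero n j))]
  have : ∀ i ∈ Finset.univ, x (mid n i) * Pi.single (M := fun _ => ℝ) (mid n j) 1 (mid n i)
      = if i = j then x (mid n j) else 0 := by
    intro i _
    by_cases h : i = j
    · subst h; simp
    · have : mid n i ≠ mid n j := by
        simp [mid, Fin.ext_iff]
        omega
      simp [Pi.single_eq_of_ne this, h]
  rw [Finset.sum_congr rfl this]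
  simp

lemma eta_nondeg (n : ℕ) (w : Fin (n + 2) → ℝ) (h : ∀ y, eta n w y = 0) : w = 0 := by
  funext j
  by_cases h0 : j = 0
  · subst h0
    have := h (Vvec n); rw [eta_Vvec] at this; simpa using this
  by_cases hl : j = lastIdx n
  · subst hl
    have := h (Uvec n); rw [eta_Uvec] at this; simpa using this
  · have hj : (j : ℕ) ≠ 0 := fun hc => h0 (Fin.ext hc)
    have hj2 : (j : ℕ) ≠ n + 1 := fun hc => hl (Fin.ext hc)
    have hjlt : (j : ℕ) - 1 < n := by omega
    have hje : j = mid n ⟨(j : ℕ) - 1, hjlt⟩ := by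
      simp [mid, Fin.ext_iff]; omega
    have := h (Pi.single (mid n ⟨(j : ℕ) - 1, hjlt⟩) 1)
    rw [eta_X] at this
    rw [hje]
    simpa using this

/-- a curvature tensor `R ∈ 𝓡(𝔤)` for `𝔤 ⊆ so(1,n+1)_{ℝU}` satisfies
`R(U,x) = 0` for every `x ∈ U^⊥ = span{U, X_1, …, X_n}`. -/
theorem statement11 (n : ℕ)
    (𝔤 : LieSubalgebra ℝ (Module.End ℝ (Fin (n + 2) → ℝ)))
    (h𝔤 : ∀ M ∈ 𝔤, (∀ x y, eta n (M x) y + eta n x (M y) = 0) ∧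
      (∀ v ∈ Submodule.span ℝ {Uvec n}, M v ∈ Submodule.span ℝ {Uvec n}))
    (R : (Fin (n + 2) → ℝ) →ₗ[ℝ] (Fin (n + 2) → ℝ) →ₗ[ℝ] Module.End ℝ (Fin (n + 2) → ℝ))
    (hRval : ∀ u v, R u v ∈ 𝔤)
    (hRanti : ∀ u v, R u v = -R v u)
    (hRBianchi : ∀ u v w, R u v w + R v w u + R w u v = 0) :
    ∀ x ∈ Submodule.span ℝ (insert (Uvec n) (Xset n)), R (Uvec n) x = 0 := by
  set S : (Fin (n + 2) → ℝ) → (Fin (n + 2) → ℝ) → (Fin (n + 2) → ℝ) →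
      (Fin (n + 2) → ℝ) → ℝ := fun u v a b => eta n (R u v a) b with hSdef
  -- antisymmetry in first pair
  have h1 : ∀ u v a b, S u v a b = - S v u a b := by
    intro u v a b
    simp only [hSdef]
    rw [hRanti u v]
    simp [eta_neg_left]
  -- antisymmetry in second pair
  have h2 : ∀ u v a b, S u v a b = - S u v b a := by
    intro u v a b
    have hk := (h𝔤 (R u v) (hRval u v)).1 a b
    simp only [hSdef]
    rw [eta_comm n a (R u v b)] at hk
    linarith
  -- Bianchi for S
  have h3 : ∀ u v a b, S u v a b + S v a u b + S a u v b = 0 := by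
    intro u v a b
    have hb := hRBianchi u v a
    have : eta n (R u v a + R v a u + R a u v) b = 0 := by
      rw [hb]
      simpa using eta_smul_left n 0 0 b
    rw [eta_add_left, eta_add_left] at this
    exact this
  -- pair symmetry
  have pairSym : ∀ u v a b, S u v a b = S a b u v := by
    intro u v a b
    have B1 := h3 u v a b
    have B2 := h3 v a b u
    have B3 := h3 a b u v
    have B4 := h3 b u v a
    have e1 := h2 v a b u
    have e2 := h2 a b v u
    have e3 := h1 b v a u
    have e4 := h2 v b a u
    have e5 := h1 b u a v
    have e6 := h2 u b a v
    have e7 := h1 a u v b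
    have e8 := h2 u a v b
    have e9 := h2 b u v a
    have e10 := h2 u v b a
    have e11 := h1 v b u a
    have e12 := h1 u b v a
    linarith
  -- R a b sends U into ℝ U
  have hU : ∀ a b, ∃ c : ℝ, R a b (Uvec n) = c • Uvec n := by
    intro a b
    have := (h𝔤 (R a b) (hRval a b)).2 (Uvec n) (Submodule.mem_span_singleton_self _)
    obtain ⟨c, hc⟩ := Submodule.mem_span_singleton.mp this
    exact ⟨c, hc.symm⟩
  -- key: R U x = 0 for x ⊥ U
  have key : ∀ x, eta n (Uvec n) x = 0 → R (Uvec n) x = 0 := by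
    intro x hx
    have hzero : ∀ a b, eta n (R (Uvec n) x a) b = 0 := by
      intro a b
      have := pairSym (Uvec n) x a b
      simp only [hSdef] at this
      rw [this]
      obtain ⟨c, hc⟩ := hU a b
      rw [hc, eta_smul_left, hx, mul_zero]
    apply LinearMap.ext
    intro a
    have := eta_nondeg n (R (Uvec n) x a) (hzero a)
    simpa using this
  intro x hx
  have hle : Submodule.span ℝ (insert (Uvec n) (Xset n)) ≤ LinearMap.ker (R (Uvec n)) := by
    rw [Submodule.span_le]
    intro y hy
    simp only [Set.mem_insert_iff, Xset, Set.mem_range] at hy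
    rw [SetLike.mem_coe, LinearMap.mem_ker]
    rcases hy with rfl | ⟨i, rfl⟩
    · apply key
      rw [eta_Uvec]
      simp [Uvec, Pi.single_eq_of_ne (lastIdx_ne_zero n)]
    · apply key
      rw [eta_comm, eta_Uvec]
      simp [Pi.single_eq_of_ne (Ne.symm (mid_ne_last n i))]
  exact LinearMap.mem_ker.mp (hle hx)
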